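/- Let Γ be a finite group and (V, ρ) a finite-dimensional complex representation of Γ with character γ. Fix g = (g_1,…,g_n) ∈ Γⁿ and s ∈ S_n, and let T be the linear endomorphism of V^{⊗n} determined by T(v_1 ⊗ ⋯ ⊗ v_n) = ρ(g_1)v_{s^{−1}(1)} ⊗ ⋯ ⊗ ρ(g_n)v_{s^{−1}(n)}. Then the trace of T equals the product, over the disjoint cycles (j_1 j_2 ⋯ j_m) of s (fixed points counted as 1-cycles), of γ(g_{j_m} g_{j_{m−1}} ⋯ g_{j_1}). -/

import Mathlib

open Equiv TensorProduct PiTensorProduct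

section CycleTools

variable (n : ℕ) (Γ : Type*) [Group Γ]

/-- the length of the cycle of `s` through `j` (fixed points count as 1-cycles). -/
noncomputable def cycLen (s : Equiv.Perm (Fin n)) (j : Fin n) : ℕ :=
  Set.ncard {k | s.SameCycle j k}

/-- the cycle product `g_{j_m} g_{j_{m-1}} ⋯ g_{j_1}` of the cycle `(j_1 j_2 ⋯ j_m)`
of `s` through `j = j_1` (so `j_{k+1} = s(j_k)`). -/
noncomputable def cycProd (g : Fin n → Γ) (s : Equiv.Perm (Fin n)) (j : Fin n) : Γ :=
  (((List.range (cycLen n s j)).reverse).map fun k => g ((s ^ k) j)).prod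

end CycleTools

/-!
In a basis of `V`, with `A i` the matrix of `ρ (g i)`, the trace of `T` is
`∑ f, ∏ i, A i (f i) (f (s⁻¹ i))`, summed over all multi-indices `f : Fin n → ι`. Each factor
couples `f` only along a single cycle of `s`, so enumerating every cycle `k, s k, …, s^(m-1) k`
from its representative `k ∈ R` splits the sum into a product over the cycles. The factor of a
cycle is a sum over closed paths `r : Fin m → ι` of `∏ t, A (s^t k) (r t) (r (t - 1))`, which is
the trace of `A (s^(m-1) k) ⋯ A k`, i.e. of the matrix of `ρ` at the cycle product.
-/

open Function

namespace Matrix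

variable {ι R : Type*} [Fintype ι] [DecidableEq ι] [CommSemiring R]

-- The extra factor `N` closes the path; generalizing over it makes the induction go through.
theorem trace_mul_prod_range_reverse (M : ℕ → Matrix ι ι R) (m : ℕ) (N : Matrix ι ι R) :
    trace (N * ((List.range m).reverse.map M).prod) =
      ∑ r : Fin (m + 1) → ι,
        N (r 0) (r (Fin.last m)) * ∏ t : Fin m, M t (r t.succ) (r t.castSucc) := by
  induction m generalizing N with
  | zero =>
    simp only [List.range_zero, List.reverse_nil, List.map_nil, List.prod_nil, Matrix.mul_one,
      Finset.univ_eq_empty, Finset.prod_empty]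
    exact Fintype.sum_equiv (Equiv.funUnique (Fin 1) ι).symm _ _ fun _ => by simp
  | succ m ih =>
    rw [List.range_succ, List.reverse_concat, List.map_cons, List.prod_cons, ← Matrix.mul_assoc,
      ih, ← (Fin.snocEquiv fun _ => ι).sum_comp (fun r => N (r 0) (r (Fin.last (m + 1))) * _),
      Fintype.sum_prod_type, Finset.sum_comm]
    refine Fintype.sum_congr _ _ fun r => ?_
    simp only [mul_apply, Finset.sum_mul]
    refine Fintype.sum_congr _ _ fun z => ?_
    simp only [Fin.snocEquiv_apply, Fin.prod_univ_castSucc,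
      Fin.snoc_castSucc, Fin.snoc_last, Fin.succ_last, Fin.succ_castSucc, Fin.val_castSucc,
      Fin.val_last, ← Fin.castSucc_zero]
    ring

theorem trace_prod_range_reverse (M : ℕ → Matrix ι ι R) {m : ℕ} (hm : m ≠ 0) :
    trace ((List.range m).reverse.map M).prod =
      ∑ r : Fin m → ι, ∏ t : Fin m, M t (r t) (r ((finRotate m).symm t)) := by
  obtain ⟨m, rfl⟩ := Nat.exists_eq_succ_of_ne_zero hm
  rw [List.range_succ, List.reverse_concat, List.map_cons, List.prod_cons,
    trace_mul_prod_range_reverse, eq_comm,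
    ← ((finRotate (m + 1)).symm.arrowCongr (Equiv.refl ι)).sum_comp]
  refine Fintype.sum_congr _ _ fun r => ?_
  simp [Fin.prod_univ_castSucc, mul_comm]

end Matrix

theorem Fin.val_finRotate {m : ℕ} (i : Fin m) : (finRotate m i : ℕ) = (i + 1) % m := by
  have := i.neZero
  rw [finRotate_apply, Fin.val_add, Fin.val_one', Nat.add_mod_mod]

namespace Equiv.Perm

variable {α : Type*} (σ : Perm α)

theorem minimalPeriod_pos [Finite α] (x : α) : 0 < minimalPeriod σ x :=
  minimalPeriod_pos_of_mem_periodicPts (σ.injective.mem_periodicPts x)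

theorem pow_mod_minimalPeriod_apply (n : ℕ) (x : α) :
    (σ ^ (n % minimalPeriod σ x)) x = (σ ^ n) x := by
  simp only [coe_pow, iterate_mod_minimalPeriod_eq]

theorem SameCycle.exists_pow_lt_minimalPeriod [Finite α] {σ : Perm α} {x y : α}
    (h : σ.SameCycle x y) : ∃ t < minimalPeriod σ x, (σ ^ t) x = y := by
  obtain ⟨n, rfl⟩ := h.exists_nat_pow_eq
  exact ⟨n % minimalPeriod σ x, Nat.mod_lt _ (σ.minimalPeriod_pos x),
    σ.pow_mod_minimalPeriod_apply n x⟩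

theorem ncard_sameCycle [Finite α] (x : α) :
    {y | σ.SameCycle x y}.ncard = minimalPeriod σ x := by
  have himage : {y | σ.SameCycle x y} = (fun t => (σ ^ t) x) '' Set.Iio (minimalPeriod σ x) := by
    ext y
    refine ⟨fun h => h.exists_pow_lt_minimalPeriod, ?_⟩
    rintro ⟨t, -, rfl⟩
    exact ⟨t, by simp⟩
  have hinj : Set.InjOn (fun t => (σ ^ t) x) (Set.Iio (minimalPeriod σ x)) := by
    simpa only [coe_pow] using iterate_injOn_Iio_minimalPeriod
  rw [himage, hinj.ncard_image, Set.ncard_eq_toFinset_card', Set.toFinset_Iio, Nat.card_Iio]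

variable [Fintype α] {σ} {R : Finset α}

noncomputable def sigmaCycleEquiv (hR : ∀ j, ∃! k, k ∈ R ∧ σ.SameCycle j k) :
    (Σ k : R, Fin (minimalPeriod σ k)) ≃ α :=
  Equiv.ofBijective (fun x => (σ ^ (x.2 : ℕ)) x.1) <| by
    constructor
    · rintro ⟨k, t⟩ ⟨k', t'⟩ (h : (σ ^ (t : ℕ)) k = (σ ^ (t' : ℕ)) k')
      obtain rfl : k = k' := by
        refine Subtype.ext ((hR ((σ ^ (t : ℕ)) k)).unique ⟨k.2, ?_⟩ ⟨k'.2, ?_⟩)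
        · exact sameCycle_pow_left.2 SameCycle.rfl
        · exact h ▸ sameCycle_pow_left.2 SameCycle.rfl
      obtain rfl : t = t' :=
        Fin.ext <| iterate_injOn_Iio_minimalPeriod t.2 t'.2 (by simpa only [coe_pow] using h)
      rfl
    · intro j
      obtain ⟨k, ⟨hkR, hjk⟩, -⟩ := hR j
      obtain ⟨t, ht, rfl⟩ := hjk.symm.exists_pow_lt_minimalPeriod
      exact ⟨⟨⟨k, hkR⟩, ⟨t, ht⟩⟩, rfl⟩

theorem sigmaCycleEquiv_apply (hR : ∀ j, ∃! k, k ∈ R ∧ σ.SameCycle j k)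
    (x : Σ k : R, Fin (minimalPeriod σ k)) :
    sigmaCycleEquiv hR x = (σ ^ (x.2 : ℕ)) x.1 := rfl

theorem symm_apply_sigmaCycleEquiv (hR : ∀ j, ∃! k, k ∈ R ∧ σ.SameCycle j k) (k : R)
    (t : Fin (minimalPeriod σ k)) :
    σ.symm (sigmaCycleEquiv hR ⟨k, t⟩) = sigmaCycleEquiv hR ⟨k, (finRotate _).symm t⟩ := by
  rw [symm_apply_eq, sigmaCycleEquiv_apply, sigmaCycleEquiv_apply]
  conv_lhs => rw [← apply_symm_apply (finRotate _) t]
  rw [Fin.val_finRotate, pow_mod_minimalPeriod_apply, pow_succ', Perm.mul_apply]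

variable [DecidableEq α] {ι S : Type*} [Fintype ι] [DecidableEq ι] [CommSemiring S]

theorem sum_prod_apply_symm_eq_prod_trace (hR : ∀ j, ∃! k, k ∈ R ∧ σ.SameCycle j k)
    (M : α → Matrix ι ι S) :
    ∑ f : α → ι, ∏ i, M i (f i) (f (σ.symm i)) =
      ∏ k ∈ R, Matrix.trace
        ((List.range (minimalPeriod σ k)).reverse.map fun t => M ((σ ^ t) k)).prod := by
  set e := sigmaCycleEquiv hR
  calc ∑ f : α → ι, ∏ i, M i (f i) (f (σ.symm i))
      = ∑ f : α → ι, ∏ x, M (e x) (f (e x)) (f (e ⟨x.1, (finRotate _).symm x.2⟩)) := by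
        refine Fintype.sum_congr _ _ fun f => ?_
        rw [← e.prod_comp]
        refine Fintype.prod_congr _ _ fun ⟨k, t⟩ => ?_
        rw [symm_apply_sigmaCycleEquiv]
    _ = ∑ g : (Σ k : R, Fin (minimalPeriod σ k)) → ι,
          ∏ x, M (e x) (g x) (g ⟨x.1, (finRotate _).symm x.2⟩) :=
        (e.arrowCongr (Equiv.refl ι)).symm.sum_comp
          fun g => ∏ x, M (e x) (g x) (g ⟨x.1, (finRotate _).symm x.2⟩)
    _ = ∑ g : (k : R) → Fin (minimalPeriod σ k) → ι,
          ∏ k, ∏ t, M (e ⟨k, t⟩) (g k t) (g k ((finRotate _).symm t)) := by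
        rw [← (piCurry fun _ _ => ι).symm.sum_comp]
        simp only [Fintype.prod_sigma]
        rfl
    _ = ∏ k : R, ∑ r : Fin (minimalPeriod σ k) → ι,
          ∏ t, M (e ⟨k, t⟩) (r t) (r ((finRotate _).symm t)) := by
        rw [Fintype.prod_sum]
    _ = _ := by
        rw [← Finset.prod_coe_sort R]
        refine Fintype.prod_congr _ _ fun k => ?_
        rw [Matrix.trace_prod_range_reverse _ (σ.minimalPeriod_pos k).ne']
        rfl

end Equiv.Perm

theorem PiTensorProduct.trace_map_comp_reindex {κ ι R V : Type*} [Fintype κ] [DecidableEq κ]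
    [Fintype ι] [DecidableEq ι] [CommSemiring R] [AddCommMonoid V] [Module R V]
    (b : Module.Basis ι R V) (φ : κ → Module.End R V) (σ : Perm κ) :
    LinearMap.trace R (⨂[R] _ : κ, V) ((map φ).comp (reindex R (fun _ => V) σ).toLinearMap) =
      ∑ f : κ → ι, ∏ i, LinearMap.toMatrix b b (φ i) (f i) (f (σ.symm i)) := by
  rw [LinearMap.trace_eq_matrix_trace R (Basis.piTensorProduct fun _ => b), Matrix.trace]
  refine Fintype.sum_congr _ _ fun f => ?_
  simp [LinearMap.toMatrix_apply, Basis.piTensorProduct_apply,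
    Basis.piTensorProduct_repr_tprod_apply]

theorem trace_tensor_power_general (n : ℕ) (Γ : Type*) [Group Γ]
    (V : Type*) [AddCommGroup V] [Module ℂ V] [FiniteDimensional ℂ V]
    (ρ : Representation ℂ Γ V)
    (g : Fin n → Γ) (s : Equiv.Perm (Fin n))
    (R : Finset (Fin n)) (hR : ∀ j : Fin n, ∃! k : Fin n, k ∈ R ∧ s.SameCycle j k) :
    LinearMap.trace ℂ (⨂[ℂ] _ : Fin n, V)
        ((PiTensorProduct.map fun i : Fin n => ρ (g i)).comp
          (PiTensorProduct.reindex ℂ (fun _ : Fin n => V) (s : Fin n ≃ Fin n)).toLinearMap)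
      = ∏ k ∈ R, LinearMap.trace ℂ V (ρ (cycProd n Γ g s k)) := by
  let b := Module.Free.chooseBasis ℂ V
  rw [trace_map_comp_reindex b, s.sum_prod_apply_symm_eq_prod_trace hR]
  refine Finset.prod_congr rfl fun k _ => ?_
  have htoMatrix : ⇑(LinearMap.toMatrix b b) = LinearMap.toMatrixAlgEquiv b := rfl
  rw [LinearMap.trace_eq_matrix_trace ℂ b, cycProd, cycLen, s.ncard_sameCycle, map_list_prod,
    htoMatrix, map_list_prod, List.map_map, List.map_map]
  rfl

/-- **Proposition.** For a representation `(V, ρ)` of `Γ` with character `γ`, `g ∈ Γⁿ` and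
`s ∈ S_n`, let `T` be the endomorphism of `V^{⊗n}` with
`T(v_1 ⊗ ⋯ ⊗ v_n) = ρ(g_1)v_{s⁻¹(1)} ⊗ ⋯ ⊗ ρ(g_n)v_{s⁻¹(n)}`.  Then
`tr T = ∏ γ(g_{j_m} ⋯ g_{j_1})`, the product being over the disjoint cycles of `s`
(fixed points counted as 1-cycles), here encoded by a transversal `R` of the cycles. -/
theorem trace_tensor_power (n : ℕ) (Γ : Type*) [Group Γ] [Finite Γ]
    (V : Type*) [AddCommGroup V] [Module ℂ V] [FiniteDimensional ℂ V]
    (ρ : Representation ℂ Γ V)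
    (g : Fin n → Γ) (s : Equiv.Perm (Fin n))
    (R : Finset (Fin n)) (hR : ∀ j : Fin n, ∃! k : Fin n, k ∈ R ∧ s.SameCycle j k) :
    LinearMap.trace ℂ (⨂[ℂ] _ : Fin n, V)
        ((PiTensorProduct.map fun i : Fin n => ρ (g i)).comp
          (PiTensorProduct.reindex ℂ (fun _ : Fin n => V) (s : Fin n ≃ Fin n)).toLinearMap)
      = ∏ k ∈ R, LinearMap.trace ℂ V (ρ (cycProd n Γ g s k)) :=
  trace_tensor_power_general n Γ V ρ g s R hR
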